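/- arXiv:2510.00211 — 2 statements merged into one kernel-verified Lean document; each statement's English description precedes it below -/
import Mathlib

section
/- Let A be an m×m matrix and B an n×n matrix over ZMod 2, and let C = Matrix.fromBlocks A 0 0 B be the (m+n)×(m+n) block diagonal matrix with blocks A and B. Then in the ring of Laurent polynomials over ℤ, the Zulli state sum of C is the product of the state sums of A and B: ⟨C⟩ = ⟨A⟩ * ⟨B⟩, where for a square matrix M over ZMod 2 indexed by a finite type ι, ⟨M⟩ := Σ over all finsets S of ι of T(2·|S| − |ι|) * (−T(−2) − T(2))^(nul(M + Matrix.diagonal (indicator of S))), T(k) denoting the Laurent monomial of degree k and nul denoting nullity over ZMod 2. -/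
open LaurentPolynomial

/-- The nullity over `ZMod 2` of a square matrix: the finrank of the kernel of
the linear map `x ↦ M.mulVec x`. -/
noncomputable def nullity {ι : Type*} [Fintype ι] (M : Matrix ι ι (ZMod 2)) : ℕ :=
  Module.finrank (ZMod 2) (LinearMap.ker M.mulVecLin)

/-- The Zulli state sum of a square matrix over `ZMod 2`, in Laurent polynomials
over `ℤ` (the variable `T 1` plays the role of `t^(1/4)`):
`⟨M⟩ = Σ_{S : Finset ι} T (2|S| - card ι) * (-T (-2) - T 2) ^ nul (M_S)`,
where `M_S` is `M` toggled along the indicator of `S`. -/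
noncomputable def stateSum {ι : Type*} [Fintype ι] [DecidableEq ι]
    (M : Matrix ι ι (ZMod 2)) : LaurentPolynomial ℤ :=
  ∑ S : Finset ι,
    T (2 * (S.card : ℤ) - (Fintype.card ι : ℤ)) *
      (-T (-2) - T 2) ^
        nullity (M + Matrix.diagonal (fun i => if i ∈ S then (1 : ZMod 2) else 0))

lemma zulli_mem_ker_iff {m n : ℕ} (A : Matrix (Fin m) (Fin m) (ZMod 2))
    (B : Matrix (Fin n) (Fin n) (ZMod 2)) (v : Fin m ⊕ Fin n → ZMod 2) :
    (Matrix.fromBlocks A 0 0 B).mulVec v = 0 ↔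
      A.mulVec (v ∘ Sum.inl) = 0 ∧ B.mulVec (v ∘ Sum.inr) = 0 := by
  have hv : v = Sum.elim (v ∘ Sum.inl) (v ∘ Sum.inr) := by
    funext x; cases x <;> rfl
  rw [hv, Matrix.fromBlocks_mulVec]
  simp only [Matrix.zero_mulVec, add_zero, zero_add]
  constructor
  · intro h
    exact ⟨funext fun i => congrFun h (Sum.inl i), funext fun j => congrFun h (Sum.inr j)⟩
  · rintro ⟨h1, h2⟩
    rw [h1, h2]
    funext x; cases x <;> rfl

lemma zulli_nullity_fromBlocks {m n : ℕ} (A : Matrix (Fin m) (Fin m) (ZMod 2))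
    (B : Matrix (Fin n) (Fin n) (ZMod 2)) :
    nullity (Matrix.fromBlocks A 0 0 B) = nullity A + nullity B := by
  have e : (LinearMap.ker (Matrix.fromBlocks A 0 0 B).mulVecLin) ≃ₗ[ZMod 2]
      (LinearMap.ker A.mulVecLin) × (LinearMap.ker B.mulVecLin) :=
    { toFun := fun v =>
        (⟨v.1 ∘ Sum.inl, by
            have := v.2
            rw [LinearMap.mem_ker, Matrix.mulVecLin_apply, zulli_mem_ker_iff] at this
            exact LinearMap.mem_ker.2 ((Matrix.mulVecLin_apply _ _).trans this.1)⟩,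
         ⟨v.1 ∘ Sum.inr, by
            have := v.2
            rw [LinearMap.mem_ker, Matrix.mulVecLin_apply, zulli_mem_ker_iff] at this
            exact LinearMap.mem_ker.2 ((Matrix.mulVecLin_apply _ _).trans this.2)⟩)
      map_add' := fun v w => rfl
      map_smul' := fun c v => rfl
      invFun := fun p =>
        ⟨Sum.elim p.1.1 p.2.1, by
          rw [LinearMap.mem_ker, Matrix.mulVecLin_apply, zulli_mem_ker_iff]
          constructor
          · have := p.1.2
            rw [LinearMap.mem_ker, Matrix.mulVecLin_apply] at this
            convert this using 2 <;> rfl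
          · have := p.2.2
            rw [LinearMap.mem_ker, Matrix.mulVecLin_apply] at this
            convert this using 2 <;> rfl⟩
      left_inv := fun v => Subtype.ext (funext fun x => by cases x <;> rfl)
      right_inv := fun p => by
        refine Prod.ext (Subtype.ext ?_) (Subtype.ext ?_) <;> rfl }
  rw [nullity, nullity, nullity, e.finrank_eq, Module.finrank_prod]

/-- Finsets of a sum type are in bijection with pairs of finsets. -/
def zulliFinsetSumEquiv (α β : Type*) [DecidableEq α] [DecidableEq β] :
    Finset α × Finset β ≃ Finset (α ⊕ β) where
  toFun p := p.1.disjSum p.2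
  invFun u := (u.toLeft, u.toRight)
  left_inv p := by simp
  right_inv u := u.toLeft_disjSum_toRight

/-- The value of the Zulli summand of a block matrix at a split state. -/
lemma zulli_term {m n : ℕ}
    (A : Matrix (Fin m) (Fin m) (ZMod 2)) (B : Matrix (Fin n) (Fin n) (ZMod 2))
    (s : Finset (Fin m)) (t : Finset (Fin n)) :
    T (2 * ((s.disjSum t).card : ℤ) - (Fintype.card (Fin m ⊕ Fin n) : ℤ)) *
      ((-T (-2) - T 2 : LaurentPolynomial ℤ)) ^ nullity (Matrix.fromBlocks A 0 0 B +
        Matrix.diagonal (fun i => if i ∈ s.disjSum t then (1 : ZMod 2) else 0))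
    = T (2 * (s.card : ℤ) - (Fintype.card (Fin m) : ℤ)) *
        (-T (-2) - T 2) ^ nullity (A +
          Matrix.diagonal (fun i => if i ∈ s then (1 : ZMod 2) else 0)) *
      (T (2 * (t.card : ℤ) - (Fintype.card (Fin n) : ℤ)) *
        (-T (-2) - T 2) ^ nullity (B +
          Matrix.diagonal (fun i => if i ∈ t then (1 : ZMod 2) else 0))) := by
  have hdiag : (fun (x : Fin m ⊕ Fin n) =>
      if x ∈ s.disjSum t then (1 : ZMod 2) else 0)
      = Sum.elim (fun i => if i ∈ s then (1 : ZMod 2) else 0)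
          (fun j => if j ∈ t then (1 : ZMod 2) else 0) := by
    funext x
    cases x <;> simp
  have hmat : Matrix.fromBlocks A 0 0 B + Matrix.diagonal
      (fun x => if x ∈ s.disjSum t then (1 : ZMod 2) else 0)
      = Matrix.fromBlocks (A + Matrix.diagonal fun i => if i ∈ s then (1 : ZMod 2) else 0) 0 0
          (B + Matrix.diagonal fun j => if j ∈ t then (1 : ZMod 2) else 0) := by
    rw [hdiag, ← Matrix.fromBlocks_diagonal, Matrix.fromBlocks_add]
    simp
  rw [hmat, zulli_nullity_fromBlocks]
  have hcard : (((s.disjSum t).card : ℤ)) = s.card + t.card := by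
    simp
  rw [hcard]
  have hT : (2 * ((s.card : ℤ) + t.card) - (Fintype.card (Fin m ⊕ Fin n) : ℤ))
      = (2 * (s.card : ℤ) - (Fintype.card (Fin m) : ℤ))
        + (2 * (t.card : ℤ) - (Fintype.card (Fin n) : ℤ)) := by
    simp [Fintype.card_sum]
    ring
  rw [hT, T_add, pow_add]
  ring

/-- The Zulli state sum of a two-block diagonal matrix is the product of the
state sums of the blocks. -/
theorem stateSum_fromBlocks {m n : ℕ}
    (A : Matrix (Fin m) (Fin m) (ZMod 2)) (B : Matrix (Fin n) (Fin n) (ZMod 2)) :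
    stateSum (Matrix.fromBlocks A 0 0 B) = stateSum A * stateSum B := by
  rw [stateSum, stateSum, stateSum, Finset.sum_mul_sum, ← Finset.sum_product']
  refine Finset.sum_nbij' (fun S => (S.toLeft, S.toRight))
    (fun p => p.1.disjSum p.2)
    (fun _ _ => Finset.mem_univ _) (fun _ _ => Finset.mem_univ _)
    (fun S _ => S.toLeft_disjSum_toRight) (fun p _ => by simp)
    (fun S _ => ?_)
  conv_lhs => rw [← S.toLeft_disjSum_toRight]
  exact zulli_term A B S.toLeft S.toRight
end

section
/- Let ι be a finite index type and for each k in ι let m k be a natural number and A k an (m k)×(m k) matrix over ZMod 2. Then in the ring of Laurent polynomials over ℤ, the Zulli state sum of the block diagonal matrix Matrix.blockDiagonal' A is the product of the state sums of the blocks: ⟨Matrix.blockDiagonal' A⟩ = Π_{k ∈ ι} ⟨A k⟩. -/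
open LaurentPolynomial

/-!
Toggling the diagonal of `blockDiagonal' A` along `S` toggles each block `A k` along the slice
`S_k = {i | ⟨k, i⟩ ∈ S}`, and `S ↦ (S_k)_k` is a bijection. The kernel of a block diagonal matrix
is the product of the kernels of its blocks, so nullities add, as do `|S| = Σ_k |S_k|` and the
exponents of `T`. Hence the summand of `⟨blockDiagonal' A⟩` at `S` is the product of the summands
of the `⟨A k⟩` at the `S_k`, which is the expansion of `∏_k ⟨A k⟩`.
-/

theorem LaurentPolynomial.T_sum {R α : Type*} [CommSemiring R] (s : Finset α) (g : α → ℤ) :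
    (T (∑ k ∈ s, g k) : R[T;T⁻¹]) = ∏ k ∈ s, T (g k) := by
  induction s using Finset.cons_induction with
  | empty => simp
  | cons a s ha ih => rw [Finset.prod_cons, Finset.sum_cons, T_add, ih]

section BlockDiagonal

open Matrix

variable {ι : Type*} [Fintype ι] [DecidableEq ι] {o : ι → Type*} [∀ k, Fintype (o k)]

def Finset.sigmaEquivPi [∀ k, DecidableEq (o k)] : Finset (Σ k, o k) ≃ ∀ k, Finset (o k) where
  toFun S k := Finset.univ.filter fun i => ⟨k, i⟩ ∈ S
  invFun f := Finset.univ.sigma f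
  left_inv S := by ext ⟨k, i⟩; simp
  right_inv f := by ext k i; simp

theorem Matrix.blockDiagonal'_mulVec_apply {R : Type*} [NonUnitalNonAssocSemiring R]
    (B : ∀ k, Matrix (o k) (o k) R) (x : (Σ k, o k) → R) (k : ι) (i : o k) :
    (blockDiagonal' B *ᵥ x) ⟨k, i⟩ = (B k *ᵥ fun j => x ⟨k, j⟩) i := by
  simp only [mulVec, dotProduct]
  rw [← Finset.univ_sigma_univ, Finset.sum_sigma, Fintype.sum_eq_single k]
  · simp [blockDiagonal'_apply_eq]
  · intro k' hk'
    exact Finset.sum_eq_zero fun j _ => by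
      rw [blockDiagonal'_apply_ne _ _ _ (Ne.symm hk'), zero_mul]

theorem Matrix.blockDiagonal'_mulVec_eq_zero_iff {R : Type*} [NonUnitalNonAssocSemiring R]
    (B : ∀ k, Matrix (o k) (o k) R) (x : (Σ k, o k) → R) :
    blockDiagonal' B *ᵥ x = 0 ↔ ∀ k, (B k *ᵥ fun j => x ⟨k, j⟩) = 0 := by
  simp only [funext_iff, Sigma.forall, Pi.zero_apply, blockDiagonal'_mulVec_apply]

noncomputable def Matrix.kerBlockDiagonal'Equiv {R : Type*} [CommSemiring R]
    (B : ∀ k, Matrix (o k) (o k) R) :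
    LinearMap.ker (blockDiagonal' B).mulVecLin ≃ₗ[R]
      ∀ k, LinearMap.ker (B k).mulVecLin where
  toFun x k := ⟨fun i => x.1 ⟨k, i⟩,
    ((blockDiagonal'_mulVec_eq_zero_iff B x.1).1 x.2) k⟩
  invFun y := ⟨fun ki => (y ki.1).1 ki.2,
    (blockDiagonal'_mulVec_eq_zero_iff B _).2 fun k => (y k).2⟩
  map_add' _ _ := rfl
  map_smul' _ _ := rfl
  left_inv _ := rfl
  right_inv _ := rfl

theorem nullity_blockDiagonal' (B : ∀ k, Matrix (o k) (o k) (ZMod 2)) :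
    nullity (blockDiagonal' B) = ∑ k, nullity (B k) := by
  rw [nullity, (kerBlockDiagonal'Equiv B).finrank_eq, Module.finrank_pi_fintype]
  rfl

theorem nullity_blockDiagonal'_add_diagonal_sigma [∀ k, DecidableEq (o k)]
    (B : ∀ k, Matrix (o k) (o k) (ZMod 2)) (S : ∀ k, Finset (o k)) :
    nullity (blockDiagonal' B +
        diagonal fun ki => if ki ∈ Finset.univ.sigma S then (1 : ZMod 2) else 0) =
      ∑ k, nullity (B k + diagonal fun i => if i ∈ S k then 1 else 0) := by
  have hdiag : (diagonal fun ki => if ki ∈ Finset.univ.sigma S then (1 : ZMod 2) else 0) =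
      blockDiagonal' fun k => diagonal fun i => if i ∈ S k then 1 else 0 := by
    rw [blockDiagonal'_diagonal]
    simp
  rw [hdiag, ← blockDiagonal'_add, nullity_blockDiagonal']
  rfl

end BlockDiagonal

/-- The Zulli state sum of a block diagonal matrix is the product of the
state sums of the blocks. -/
theorem stateSum_blockDiagonal' {ι : Type*} [Fintype ι] [DecidableEq ι]
    {m : ι → ℕ} (A : ∀ k, Matrix (Fin (m k)) (Fin (m k)) (ZMod 2)) :
    stateSum (Matrix.blockDiagonal' A) = ∏ k : ι, stateSum (A k) := by
  simp only [stateSum]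
  rw [Fintype.prod_sum]
  refine Fintype.sum_equiv Finset.sigmaEquivPi _ _ fun S => ?_
  obtain ⟨f, rfl⟩ := Finset.sigmaEquivPi.symm.surjective S
  rw [Equiv.apply_symm_apply]
  have hcard : 2 * ((Finset.univ.sigma f).card : ℤ) - Fintype.card (Σ k, Fin (m k)) =
      ∑ k, (2 * ((f k).card : ℤ) - Fintype.card (Fin (m k))) := by
    simp [Finset.card_sigma, Fintype.card_sigma, Finset.sum_sub_distrib, Finset.mul_sum]
  rw [Finset.prod_mul_distrib, Finset.prod_pow_eq_pow_sum, ← T_sum, ← hcard,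
    ← nullity_blockDiagonal'_add_diagonal_sigma]
  rfl
end
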